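/- Fix p ∈ (1,∞). The function H* is convex on [0,1]². Moreover, H* is strictly convex on (0,1] × [0,1]: for all f, g in (0,1] × [0,1] with f ≠ g and all θ ∈ (0,1), H*(θf + (1−θ)g) < θ H*(f) + (1−θ) H*(g). -/

import Mathlib

/-!
The two radical terms of `H*` are the two-dimensional `ℓᵖ` norm `‖(x, y)‖ₚ` evaluated at
affine functions of `f`, so `H*` is convex by Minkowski's inequality. For strictness, write
`‖(x, y)‖ₚ = x φ(y / x)` with `φ t = (1 + tᵖ)^(1/p)`, whose derivative
`(tᵖ / (1 + tᵖ))^(1 - 1/p)` is strictly increasing: the norm is then strictly convex along any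
segment whose endpoints are not on a common ray. Two distinct points of `(0,1] × [0,1]` cannot
give parallel vectors both for `(f₁, f₂)` and for `(f₁, 1 - f₂)`, because the two second
coordinates sum to `1`.
-/

/-- The limiting objective `H*` on `[0,1]²`. -/
noncomputable def Hstar (p : ℝ) (f : ℝ × ℝ) : ℝ :=
  -f.1 + (f.1 ^ p + (1 - f.2) ^ p) ^ (1 / p) + (f.1 ^ p + f.2 ^ p) ^ (1 / p) - 1

open Real Set

noncomputable def pNorm (p x y : ℝ) : ℝ := (x ^ p + y ^ p) ^ (1 / p)

section pNorm

variable {p : ℝ}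

lemma pNorm_add_le (hp : 1 ≤ p) {a b c d : ℝ} (ha : 0 ≤ a) (hb : 0 ≤ b) (hc : 0 ≤ c)
    (hd : 0 ≤ d) : pNorm p (a + c) (b + d) ≤ pNorm p a b + pNorm p c d := by
  simpa [pNorm, Fin.sum_univ_two, abs_of_nonneg, ha, hb, hc, hd, add_nonneg] using
    Real.Lp_add_le Finset.univ ![a, b] ![c, d] hp

lemma pNorm_mul (hp : 0 < p) {c x y : ℝ} (hc : 0 ≤ c) (hx : 0 ≤ x) (hy : 0 ≤ y) :
    pNorm p (c * x) (c * y) = c * pNorm p x y := by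
  rw [pNorm, pNorm, mul_rpow hc hx, mul_rpow hc hy, ← mul_add,
    mul_rpow (by positivity) (by positivity), ← rpow_mul hc, mul_one_div_cancel hp.ne', rpow_one]

lemma pNorm_mul_add_mul_le (hp : 1 ≤ p) {x₁ y₁ x₂ y₂ a b : ℝ} (hx₁ : 0 ≤ x₁) (hy₁ : 0 ≤ y₁)
    (hx₂ : 0 ≤ x₂) (hy₂ : 0 ≤ y₂) (ha : 0 ≤ a) (hb : 0 ≤ b) :
    pNorm p (a * x₁ + b * x₂) (a * y₁ + b * y₂) ≤ a * pNorm p x₁ y₁ + b * pNorm p x₂ y₂ := by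
  have hp₀ : 0 < p := one_pos.trans_le hp
  calc pNorm p (a * x₁ + b * x₂) (a * y₁ + b * y₂)
      ≤ pNorm p (a * x₁) (a * y₁) + pNorm p (b * x₂) (b * y₂) :=
        pNorm_add_le hp (by positivity) (by positivity) (by positivity) (by positivity)
    _ = a * pNorm p x₁ y₁ + b * pNorm p x₂ y₂ := by
        rw [pNorm_mul hp₀ ha hx₁ hy₁, pNorm_mul hp₀ hb hx₂ hy₂]

lemma pNorm_eq_mul_pNorm_one_div (hp : 0 < p) {x y : ℝ} (hx : 0 < x) (hy : 0 ≤ y) :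
    pNorm p x y = x * pNorm p 1 (y / x) := by
  rw [← pNorm_mul hp hx.le zero_le_one (by positivity), mul_one, mul_div_cancel₀ _ hx.ne']

lemma pNorm_one (p : ℝ) : pNorm p 1 = fun t => (1 + t ^ p) ^ (1 / p) := by
  ext t
  rw [pNorm, one_rpow]

lemma hasDerivAt_pNorm_one (hp : 1 < p) {t : ℝ} (ht : 0 < t) :
    HasDerivAt (pNorm p 1) ((t ^ p / (1 + t ^ p)) ^ (1 - 1 / p)) t := by
  have hp₀ : 0 < p := one_pos.trans hp
  have hsum : 0 < 1 + t ^ p := by positivity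
  have hderiv := ((hasDerivAt_rpow_const (p := p) (Or.inl ht.ne')).const_add 1).rpow_const
    (p := 1 / p) (Or.inl hsum.ne')
  rw [pNorm_one]
  convert hderiv using 1
  rw [div_rpow (by positivity) hsum.le, ← rpow_mul ht.le, div_eq_mul_inv, ← rpow_neg hsum.le]
  field_simp
  ring_nf

lemma strictConvexOn_pNorm_one (hp : 1 < p) : StrictConvexOn ℝ (Ici 0) (pNorm p 1) := by
  have hp₀ : 0 < p := one_pos.trans hp
  have hcont : Continuous (pNorm p 1) := by
    rw [pNorm_one]
    exact (continuous_const.add (continuous_rpow_const hp₀.le)).rpow_const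
      fun _ => Or.inr (by positivity)
  refine StrictMonoOn.strictConvexOn_of_deriv (convex_Ici 0) hcont.continuousOn ?_
  rw [interior_Ici]
  intro s (hs : 0 < s) t (ht : 0 < t) hst
  rw [(hasDerivAt_pNorm_one hp hs).deriv, (hasDerivAt_pNorm_one hp ht).deriv]
  have hpow : s ^ p < t ^ p := rpow_lt_rpow hs.le hst hp₀
  have hratio : s ^ p / (1 + s ^ p) < t ^ p / (1 + t ^ p) := by
    rw [div_lt_div_iff₀ (by positivity) (by positivity)]
    linarith
  exact rpow_lt_rpow (by positivity) hratio (by rw [sub_pos, div_lt_one hp₀]; exact hp)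

lemma pNorm_mul_add_mul_lt (hp : 1 < p) {x₁ y₁ x₂ y₂ a b : ℝ} (hx₁ : 0 < x₁) (hy₁ : 0 ≤ y₁)
    (hx₂ : 0 < x₂) (hy₂ : 0 ≤ y₂) (ha : 0 < a) (hb : 0 < b) (hne : x₁ * y₂ ≠ x₂ * y₁) :
    pNorm p (a * x₁ + b * x₂) (a * y₁ + b * y₂) < a * pNorm p x₁ y₁ + b * pNorm p x₂ y₂ := by
  have hp₀ : 0 < p := one_pos.trans hp
  set X := a * x₁ + b * x₂
  have hX : 0 < X := by positivity
  have hratio : y₁ / x₁ ≠ y₂ / x₂ := by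
    rw [ne_eq, div_eq_div_iff hx₁.ne' hx₂.ne']
    exact fun h => hne (by linarith)
  -- the perspective `x φ(y / x)` of `φ = pNorm p 1`, with weights `a x₁ / X` and `b x₂ / X`
  have hphi := (strictConvexOn_pNorm_one hp).2 (mem_Ici.2 (by positivity : 0 ≤ y₁ / x₁))
    (mem_Ici.2 (by positivity : 0 ≤ y₂ / x₂)) hratio (by positivity : 0 < a * x₁ / X)
    (by positivity : 0 < b * x₂ / X) (by rw [← add_div, div_self hX.ne'])
  have hcombo : (a * y₁ + b * y₂) / X = a * x₁ / X * (y₁ / x₁) + b * x₂ / X * (y₂ / x₂) := by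
    field_simp
  rw [pNorm_eq_mul_pNorm_one_div hp₀ hX (by positivity), pNorm_eq_mul_pNorm_one_div hp₀ hx₁ hy₁,
    pNorm_eq_mul_pNorm_one_div hp₀ hx₂ hy₂, hcombo]
  calc X * pNorm p 1 (a * x₁ / X * (y₁ / x₁) + b * x₂ / X * (y₂ / x₂))
      < X * (a * x₁ / X * pNorm p 1 (y₁ / x₁) + b * x₂ / X * pNorm p 1 (y₂ / x₂)) :=
        mul_lt_mul_of_pos_left hphi hX
    _ = a * (x₁ * pNorm p 1 (y₁ / x₁)) + b * (x₂ * pNorm p 1 (y₂ / x₂)) := by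
        field_simp

end pNorm

lemma Hstar_eq (p : ℝ) (f : ℝ × ℝ) :
    Hstar p f = -f.1 + pNorm p f.1 (1 - f.2) + pNorm p f.1 f.2 - 1 :=
  rfl

lemma Hstar_smul_add_smul {p a b : ℝ} (hab : a + b = 1) (f g : ℝ × ℝ) :
    Hstar p (a • f + b • g) = -(a * f.1 + b * g.1)
      + pNorm p (a * f.1 + b * g.1) (a * (1 - f.2) + b * (1 - g.2))
      + pNorm p (a * f.1 + b * g.1) (a * f.2 + b * g.2) - 1 := by
  have h : 1 - (a * f.2 + b * g.2) = a * (1 - f.2) + b * (1 - g.2) := by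
    linear_combination -hab
  simp only [Hstar_eq, Prod.fst_add, Prod.snd_add, Prod.smul_fst, Prod.smul_snd, smul_eq_mul, h]

lemma convexOn_Hstar {p : ℝ} (hp : 1 ≤ p) :
    ConvexOn ℝ (Icc (0 : ℝ) 1 ×ˢ Icc (0 : ℝ) 1) (Hstar p) := by
  refine ⟨(convex_Icc 0 1).prod (convex_Icc 0 1), ?_⟩
  rintro f ⟨⟨hf₁, -⟩, hf₂, hf₂'⟩ g ⟨⟨hg₁, -⟩, hg₂, hg₂'⟩ a b ha hb hab
  have h₁ := pNorm_mul_add_mul_le hp hf₁ (sub_nonneg.2 hf₂') hg₁ (sub_nonneg.2 hg₂') ha hb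
  have h₂ := pNorm_mul_add_mul_le hp hf₁ hf₂ hg₁ hg₂ ha hb
  rw [Hstar_smul_add_smul hab, smul_eq_mul, smul_eq_mul, Hstar_eq p f, Hstar_eq p g]
  linear_combination h₁ + h₂ + hab

lemma strictConvexOn_Hstar {p : ℝ} (hp : 1 < p) :
    StrictConvexOn ℝ (Ioc (0 : ℝ) 1 ×ˢ Icc (0 : ℝ) 1) (Hstar p) := by
  refine ⟨(convex_Ioc 0 1).prod (convex_Icc 0 1), ?_⟩
  rintro f ⟨⟨hf₁, -⟩, hf₂, hf₂'⟩ g ⟨⟨hg₁, -⟩, hg₂, hg₂'⟩ hfg a b ha hb hab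
  have hnonparallel : f.1 * (1 - g.2) ≠ g.1 * (1 - f.2) ∨ f.1 * g.2 ≠ g.1 * f.2 := by
    by_contra! ⟨h₁, h₂⟩
    have e₁ : f.1 = g.1 := by linarith
    rw [e₁] at h₂
    exact hfg (Prod.ext e₁ (mul_left_cancel₀ hg₁.ne' h₂).symm)
  have h₁ := pNorm_mul_add_mul_le hp.le hf₁.le (sub_nonneg.2 hf₂') hg₁.le (sub_nonneg.2 hg₂')
    ha.le hb.le
  have h₂ := pNorm_mul_add_mul_le hp.le hf₁.le hf₂ hg₁.le hg₂ ha.le hb.le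
  rw [Hstar_smul_add_smul hab, smul_eq_mul, smul_eq_mul, Hstar_eq p f, Hstar_eq p g]
  rcases hnonparallel with h | h
  · have h₁' := pNorm_mul_add_mul_lt hp hf₁ (sub_nonneg.2 hf₂') hg₁ (sub_nonneg.2 hg₂') ha hb h
    linear_combination h₁' + h₂ + hab
  · have h₂' := pNorm_mul_add_mul_lt hp hf₁ hf₂ hg₁ hg₂ ha hb h
    linear_combination h₁ + h₂' + hab

/-- For `p ∈ (1,∞)`, `H*` is convex on `[0,1]²`, and strictly convex on `(0,1] × [0,1]`. -/
theorem stmt_6 (p : ℝ) (hp : 1 < p) :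
    ConvexOn ℝ (Set.Icc (0 : ℝ) 1 ×ˢ Set.Icc (0 : ℝ) 1) (Hstar p) ∧
    (∀ f g : ℝ × ℝ, f ∈ Set.Ioc (0 : ℝ) 1 ×ˢ Set.Icc (0 : ℝ) 1 →
      g ∈ Set.Ioc (0 : ℝ) 1 ×ˢ Set.Icc (0 : ℝ) 1 → f ≠ g →
      ∀ θ : ℝ, 0 < θ → θ < 1 →
        Hstar p (θ • f + (1 - θ) • g) < θ * Hstar p f + (1 - θ) * Hstar p g) := by
  refine ⟨convexOn_Hstar hp.le, fun f g hf hg hfg θ hθ₀ hθ₁ => ?_⟩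
  simpa only [smul_eq_mul] using
    (strictConvexOn_Hstar hp).2 hf hg hfg hθ₀ (sub_pos.2 hθ₁) (add_sub_cancel θ 1)
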